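/- arXiv:2002.12174 — 5 statements merged into one kernel-verified Lean document; each statement's English description precedes it below -/
import Mathlib

section
/- For every integer N ≥ 1, the weights satisfy ∑_{i=1}^{N} η_N^i / √i ≥ 1/√N. -/
/-- Learning rate `η_j = (H+1)/(H+j)` and weights
`η_N^0 = ∏_{j=1}^N (1-η_j)`, `η_N^i = η_i · ∏_{j=i+1}^N (1-η_j)` (1 ≤ i ≤ N)
of the UCB-H/OPIQ Q-learning update. -/
noncomputable def etaWeight (H N i : ℕ) : ℝ :=
  (if i = 0 then 1 else ((H : ℝ) + 1) / ((H : ℝ) + i)) *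
    ∏ j ∈ Finset.Icc (i + 1) N, (1 - ((H : ℝ) + 1) / ((H : ℝ) + j))

/-!
Since `η_1 = 1`, the weights `η_N^1, …, η_N^N` telescope to `1 - ∏_{j=1}^N (1 - η_j) = 1`,
and they are nonnegative because `η_j ≤ 1`. So `∑ η_N^i / √i` is an average of the numbers
`1/√i ≥ 1/√N`.
-/

open Finset

theorem sum_mul_prod_Icc_one_sub {R : Type*} [CommRing R] (a : ℕ → R) (N : ℕ) :
    ∑ i ∈ Icc 1 N, a i * ∏ j ∈ Icc (i + 1) N, (1 - a j) =
      1 - ∏ j ∈ Icc 1 N, (1 - a j) := by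
  induction N with
  | zero => simp
  | succ N ih =>
    have tail : ∀ i ∈ Icc 1 N, a i * ∏ j ∈ Icc (i + 1) (N + 1), (1 - a j)
        = a i * (∏ j ∈ Icc (i + 1) N, (1 - a j)) * (1 - a (N + 1)) := fun i hi => by
      rw [prod_Icc_succ_top (by simp at hi; omega), mul_assoc]
    rw [sum_Icc_succ_top (by omega : 1 ≤ N + 1), sum_congr rfl tail, ← sum_mul, ih,
      Icc_eq_empty (by omega : ¬N + 1 + 1 ≤ N + 1), prod_empty,
      prod_Icc_succ_top (by omega : 1 ≤ N + 1)]
    ring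

noncomputable def learningRate (H j : ℕ) : ℝ := ((H : ℝ) + 1) / ((H : ℝ) + j)

theorem learningRate_one (H : ℕ) : learningRate H 1 = 1 := by
  simp only [learningRate, Nat.cast_one]
  exact div_self (by positivity)

theorem learningRate_le_one (H : ℕ) {j : ℕ} (hj : 1 ≤ j) : learningRate H j ≤ 1 := by
  unfold learningRate
  rw [div_le_one (by positivity)]
  gcongr
  exact_mod_cast hj

theorem etaWeight_eq (H N : ℕ) {i : ℕ} (hi : i ≠ 0) :
    etaWeight H N i = learningRate H i * ∏ j ∈ Icc (i + 1) N, (1 - learningRate H j) := by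
  simp [etaWeight, learningRate, hi]

theorem etaWeight_nonneg (H N i : ℕ) : 0 ≤ etaWeight H N i := by
  refine mul_nonneg (by split_ifs <;> positivity) (prod_nonneg fun j hj => ?_)
  exact sub_nonneg.2 (learningRate_le_one H (by simp at hj; omega))

theorem sum_etaWeight_eq_one (H : ℕ) {N : ℕ} (hN : 1 ≤ N) :
    ∑ i ∈ Icc 1 N, etaWeight H N i = 1 := by
  rw [sum_congr rfl fun i hi => etaWeight_eq H N (by simp at hi; omega),
    sum_mul_prod_Icc_one_sub,
    prod_eq_zero (mem_Icc.2 ⟨le_rfl, hN⟩) (by rw [learningRate_one, sub_self]), sub_zero]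

theorem etaWeight_sum_div_sqrt_ge_general (H : ℕ) (N : ℕ) (hN : 1 ≤ N) :
    1 / Real.sqrt N ≤ ∑ i ∈ Finset.Icc 1 N, etaWeight H N i / Real.sqrt i := by
  calc 1 / Real.sqrt N = ∑ i ∈ Icc 1 N, etaWeight H N i / Real.sqrt N := by
        rw [← sum_div, sum_etaWeight_eq_one H hN]
    _ ≤ ∑ i ∈ Icc 1 N, etaWeight H N i / Real.sqrt i := by
        refine sum_le_sum fun i hi => ?_
        obtain ⟨hi1, hiN⟩ := mem_Icc.1 hi
        gcongr
        exact etaWeight_nonneg H N i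

/-- Lemma 1(a), lower half: `∑_{i=1}^N η_N^i / √i ≥ 1/√N`. -/
theorem etaWeight_sum_div_sqrt_ge (H : ℕ) (hH : 1 ≤ H) (N : ℕ) (hN : 1 ≤ N) :
    1 / Real.sqrt N ≤ ∑ i ∈ Finset.Icc 1 N, etaWeight H N i / Real.sqrt i :=
  etaWeight_sum_div_sqrt_ge_general H N hN
end

section
/- For every integer N ≥ 1, the weights satisfy ∑_{i=1}^{N} η_N^i / √i ≤ 2/√N. -/
/-!
Writing `S_N = ∑_{i=1}^N η_N^i / √i`, the weights satisfy `η_{N+1}^i = (1 - η_{N+1}) η_N^i`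
for `i ≤ N`, so `S_{N+1} = (1 - η_{N+1}) S_N + η_{N+1} / √(N+1)`, and `S_N ≤ 2/√N` follows by
induction on `N` from the elementary bound `2 √N √(N+1) ≤ 2N + 1`. The induction can start at
`N = 0`, where both sides are `0` (Lean's `2 / √0 = 0`).
-/

open Real Finset

lemma one_sub_div_add_succ (H n : ℕ) :
    1 - ((H : ℝ) + 1) / ((H : ℝ) + (n + 1 : ℕ)) = n / (H + n + 1) := by
  push_cast
  field_simp
  ring

lemma etaWeight_succ_of_le (H : ℕ) {n i : ℕ} (hi : i ≤ n) :
    etaWeight H (n + 1) i = n / (H + n + 1) * etaWeight H n i := by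
  rw [etaWeight, etaWeight, prod_Icc_succ_top (by omega), one_sub_div_add_succ]
  ring

lemma etaWeight_succ_self (H n : ℕ) :
    etaWeight H (n + 1) (n + 1) = (H + 1) / (H + n + 1) := by
  rw [etaWeight, if_neg n.succ_ne_zero, Icc_eq_empty (by omega), prod_empty, mul_one]
  push_cast
  ring_nf

lemma sum_etaWeight_div_sqrt_succ (H n : ℕ) :
    ∑ i ∈ Icc 1 (n + 1), etaWeight H (n + 1) i / √i
      = n / (H + n + 1) * ∑ i ∈ Icc 1 n, etaWeight H n i / √i
        + (H + 1) / (H + n + 1) / √(n + 1) := by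
  rw [sum_Icc_succ_top (by omega), mul_sum, etaWeight_succ_self]
  congr 1
  · refine sum_congr rfl fun i hi => ?_
    rw [etaWeight_succ_of_le H (mem_Icc.1 hi).2, mul_div_assoc]
  · push_cast
    rfl

lemma two_mul_sqrt_mul_sqrt_add_one_le {x : ℝ} (hx : 0 ≤ x) :
    2 * (√x * √(x + 1)) ≤ 2 * x + 1 := by
  nlinarith [sq_nonneg (√x - √(x + 1)), sq_sqrt hx, sq_sqrt (by linarith : 0 ≤ x + 1)]

lemma mul_two_div_sqrt (x : ℝ) : x * (2 / √x) = 2 * √x := by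
  rw [mul_div_assoc', mul_comm x 2, mul_div_assoc, div_sqrt]

lemma convex_step_two_div_sqrt_le {h x : ℝ} (hh : 0 ≤ h) (hx : 0 ≤ x) :
    x / (h + x + 1) * (2 / √x) + (h + 1) / (h + x + 1) / √(x + 1) ≤ 2 / √(x + 1) := by
  have hpos : 0 < √(x + 1) := sqrt_pos.2 (by linarith)
  have lhs : x / (h + x + 1) * (2 / √x) + (h + 1) / (h + x + 1) / √(x + 1)
      = (2 * (√x * √(x + 1)) + (h + 1)) / (h + x + 1) / √(x + 1) := by
    rw [div_mul_eq_mul_div, mul_two_div_sqrt]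
    field_simp
  rw [lhs, div_le_div_iff_of_pos_right hpos, div_le_iff₀ (by positivity)]
  linarith [two_mul_sqrt_mul_sqrt_add_one_le hx]

theorem etaWeight_sum_div_sqrt_le_general (H : ℕ) (N : ℕ) :
    ∑ i ∈ Finset.Icc 1 N, etaWeight H N i / Real.sqrt i ≤ 2 / Real.sqrt N := by
  induction N with
  | zero => simp
  | succ n ih =>
    rw [sum_etaWeight_div_sqrt_succ]
    calc n / (H + n + 1) * ∑ i ∈ Icc 1 n, etaWeight H n i / √i + (H + 1) / (H + n + 1) / √(n + 1)
        ≤ n / (H + n + 1) * (2 / √n) + (H + 1) / (H + n + 1) / √(n + 1) := by gcongr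
      _ ≤ 2 / √(n + 1) := convex_step_two_div_sqrt_le H.cast_nonneg n.cast_nonneg
      _ = 2 / √↑(n + 1) := by push_cast; rfl

/-- Lemma 1(a), upper half: `∑_{i=1}^N η_N^i / √i ≤ 2/√N`. -/
theorem etaWeight_sum_div_sqrt_le (H : ℕ) (hH : 1 ≤ H) (N : ℕ) (hN : 1 ≤ N) :
    ∑ i ∈ Finset.Icc 1 N, etaWeight H N i / Real.sqrt i ≤ 2 / Real.sqrt N :=
  etaWeight_sum_div_sqrt_le_general H N
end

section
/- For every integer N ≥ 1 and every integer 1 ≤ i ≤ N, the weight η_N^i satisfies η_N^i ≤ 2H/N; equivalently, max_{1 ≤ i ≤ N} η_N^i ≤ 2H/N. -/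
lemma one_sub_learningRate (H N : ℕ) :
    1 - ((H : ℝ) + 1) / ((H : ℝ) + (N + 1 : ℕ)) = (N : ℝ) / ((H : ℝ) + (N + 1 : ℕ)) := by
  have : (0 : ℝ) < (H : ℝ) + (N + 1 : ℕ) := by positivity
  field_simp
  push_cast
  ring

lemma etaWeight_succ {H N i : ℕ} (hiN : i ≤ N) :
    etaWeight H (N + 1) i = etaWeight H N i * ((N : ℝ) / ((H : ℝ) + (N + 1 : ℕ))) := by
  rw [etaWeight, etaWeight, Finset.prod_Icc_succ_top (by omega), one_sub_learningRate, mul_assoc]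

lemma etaWeight_self {H i : ℕ} (hi : i ≠ 0) :
    etaWeight H i i = ((H : ℝ) + 1) / ((H : ℝ) + i) := by
  rw [etaWeight, if_neg hi, Finset.Icc_eq_empty (by omega), Finset.prod_empty, mul_one]

lemma etaWeight_self_le {H i : ℕ} (hH : 1 ≤ H) (hi : 1 ≤ i) :
    etaWeight H i i ≤ 2 * (H : ℝ) / i := by
  have hHr : (1 : ℝ) ≤ H := by exact_mod_cast hH
  have hir : (1 : ℝ) ≤ i := by exact_mod_cast hi
  rw [etaWeight_self (by omega), div_le_div_iff₀ (by linarith) (by linarith)]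
  nlinarith

lemma two_mul_div_mul_div_le {H N : ℝ} (hH : 0 ≤ H) (hN : 0 < N) :
    2 * H / N * (N / (H + (N + 1))) ≤ 2 * H / (N + 1) := by
  rw [div_mul_div_cancel₀ hN.ne']
  exact div_le_div_of_nonneg_left (by positivity) (by positivity) (by linarith)

theorem etaWeight_le_general (H : ℕ) (hH : 1 ≤ H) (N : ℕ)
    (i : ℕ) (hi1 : 1 ≤ i) (hiN : i ≤ N) :
    etaWeight H N i ≤ 2 * (H : ℝ) / N := by
  induction N, hiN using Nat.le_induction with
  | base => exact etaWeight_self_le hH hi1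
  | succ N hiN ih =>
    have hN : (0 : ℝ) < N := by exact_mod_cast hi1.trans hiN
    calc etaWeight H (N + 1) i
        = etaWeight H N i * ((N : ℝ) / ((H : ℝ) + (N + 1 : ℕ))) := etaWeight_succ hiN
      _ ≤ 2 * (H : ℝ) / N * ((N : ℝ) / ((H : ℝ) + (N + 1 : ℕ))) := by gcongr
      _ ≤ 2 * (H : ℝ) / (N + 1 : ℕ) := by
        push_cast
        exact two_mul_div_mul_div_le H.cast_nonneg hN

/-- Lemma 1(b), first part: `η_N^i ≤ 2H/N` for all `1 ≤ i ≤ N`. -/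
theorem etaWeight_le (H : ℕ) (hH : 1 ≤ H) (N : ℕ) (hN : 1 ≤ N)
    (i : ℕ) (hi1 : 1 ≤ i) (hiN : i ≤ N) :
    etaWeight H N i ≤ 2 * (H : ℝ) / N :=
  etaWeight_le_general H hH N i hi1 hiN
end

section
/- For every integer N ≥ 1, the sum of squared weights satisfies ∑_{i=1}^{N} (η_N^i)^2 ≤ 2H/N. -/
/-!
The weights `η_N^i`, `1 ≤ i ≤ N`, are nonnegative, sum to `1`, and are each at most
`η_N = (H+1)/(H+N)`, so `∑ (η_N^i)^2 ≤ η_N · ∑ η_N^i = η_N ≤ 2H/N`. Both the normalization and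
the bound follow by induction on `N` from `η_{N+1}^i = η_N^i (1 - η_{N+1})`, the latter via
`η_N (1 - η_{N+1}) = η_{N+1} · N/(H+N) ≤ η_{N+1}`.
-/

open Finset

theorem Finset.sum_sq_le_mul_sum {ι R : Type*} [CommSemiring R] [PartialOrder R] [IsOrderedRing R]
    {s : Finset ι} {f : ι → R} {c : R} (hf : ∀ i ∈ s, 0 ≤ f i ∧ f i ≤ c) :
    ∑ i ∈ s, f i ^ 2 ≤ c * ∑ i ∈ s, f i := by
  rw [mul_sum]
  refine sum_le_sum fun i hi => ?_
  rw [sq]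
  exact mul_le_mul_of_nonneg_right (hf i hi).2 (hf i hi).1

namespace learningRate

variable (H : ℕ)

theorem nonneg (j : ℕ) : 0 ≤ learningRate H j := by
  unfold learningRate; positivity

theorem le_one {j : ℕ} (hj : 1 ≤ j) : learningRate H j ≤ 1 := by
  have : (1 : ℝ) ≤ j := by exact_mod_cast hj
  unfold learningRate
  rw [div_le_one (by positivity)]
  linarith

theorem one_sub_succ (N : ℕ) : 1 - learningRate H (N + 1) = N / ((H : ℝ) + (N + 1 : ℕ)) := by
  unfold learningRate
  field_simp
  push_cast
  ring

theorem mul_one_sub_succ_le (N : ℕ) :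
    learningRate H N * (1 - learningRate H (N + 1)) ≤ learningRate H (N + 1) :=
  calc learningRate H N * (1 - learningRate H (N + 1))
      = learningRate H (N + 1) * (N / ((H : ℝ) + N)) := by
        rw [one_sub_succ, learningRate, learningRate]; ring
    _ ≤ learningRate H (N + 1) :=
        mul_le_of_le_one_right (nonneg H _) (div_le_one_of_le₀ (by simp) (by positivity))

theorem le_two_mul_div {N : ℕ} (hH : 1 ≤ H) (hN : 1 ≤ N) : learningRate H N ≤ 2 * (H : ℝ) / N := by
  have hH' : (1 : ℝ) ≤ H := by exact_mod_cast hH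
  have hN' : (1 : ℝ) ≤ N := by exact_mod_cast hN
  rw [learningRate, div_le_div_iff₀ (by positivity) (by positivity)]
  nlinarith

end learningRate

namespace etaWeight

variable (H : ℕ) {N i : ℕ}

theorem eq_of_ne_zero (hi : i ≠ 0) :
    etaWeight H N i = learningRate H i * ∏ j ∈ Icc (i + 1) N, (1 - learningRate H j) := by
  rw [etaWeight, if_neg hi]; rfl

theorem nonneg (hi : 1 ≤ i) : 0 ≤ etaWeight H N i := by
  rw [eq_of_ne_zero H (by omega)]
  refine mul_nonneg (learningRate.nonneg H i) (prod_nonneg fun j hj => ?_)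
  exact sub_nonneg.2 (learningRate.le_one H (by simp at hj; omega))

theorem self (hN : 1 ≤ N) : etaWeight H N N = learningRate H N := by
  rw [eq_of_ne_zero H (by omega), Icc_eq_empty (by omega), prod_empty, mul_one]

theorem succ (hi : 1 ≤ i) (hiN : i ≤ N) :
    etaWeight H (N + 1) i = etaWeight H N i * (1 - learningRate H (N + 1)) := by
  rw [eq_of_ne_zero H (by omega), eq_of_ne_zero H (by omega), prod_Icc_succ_top (by omega),
    mul_assoc]

theorem sum_Icc_one (hN : 1 ≤ N) : ∑ i ∈ Icc 1 N, etaWeight H N i = 1 := by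
  induction N, hN using Nat.le_induction with
  | base =>
    rw [Icc_self, sum_singleton, self H le_rfl, learningRate, Nat.cast_one]
    exact div_self (by positivity)
  | succ N hN ih =>
    rw [sum_Icc_succ_top (by omega), self H (by omega),
      sum_congr rfl fun i hi => succ H (mem_Icc.1 hi).1 (mem_Icc.1 hi).2, ← sum_mul, ih]
    ring

theorem le_learningRate (hi : 1 ≤ i) (hiN : i ≤ N) : etaWeight H N i ≤ learningRate H N := by
  induction N, (hi.trans hiN) using Nat.le_induction with
  | base => rw [show i = 1 by omega, self H le_rfl]
  | succ N hN ih =>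
    rcases hiN.eq_or_lt with rfl | hlt
    · exact (self H hi).le
    calc etaWeight H (N + 1) i = etaWeight H N i * (1 - learningRate H (N + 1)) :=
          succ H hi (by omega)
      _ ≤ learningRate H N * (1 - learningRate H (N + 1)) :=
          mul_le_mul_of_nonneg_right (ih (by omega))
            (sub_nonneg.2 (learningRate.le_one H (by omega)))
      _ ≤ learningRate H (N + 1) := learningRate.mul_one_sub_succ_le H N

end etaWeight

/-- Lemma 1(b), second part: `∑_{i=1}^N (η_N^i)^2 ≤ 2H/N`. -/
theorem etaWeight_sum_sq_le (H : ℕ) (hH : 1 ≤ H) (N : ℕ) (hN : 1 ≤ N) :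
    ∑ i ∈ Finset.Icc 1 N, (etaWeight H N i) ^ 2 ≤ 2 * (H : ℝ) / N := by
  calc ∑ i ∈ Icc 1 N, etaWeight H N i ^ 2
      ≤ learningRate H N * ∑ i ∈ Icc 1 N, etaWeight H N i :=
        sum_sq_le_mul_sum fun i hi => ⟨etaWeight.nonneg H (mem_Icc.1 hi).1,
          etaWeight.le_learningRate H (mem_Icc.1 hi).1 (mem_Icc.1 hi).2⟩
    _ = learningRate H N := by rw [etaWeight.sum_Icc_one H hN, mul_one]
    _ ≤ 2 * (H : ℝ) / N := learningRate.le_two_mul_div H hH hN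
end

section
/- The sum of the inverse square roots of the running counts satisfies ∑_{k=1}^{K} 1/√(N_k) ≤ 2 √( (card ι) · K ). -/
/-- Running count `N_k = #{j : 1 ≤ j ≤ k, x_j = x_k}`: the number of occurrences of the
value `x_k` among the first `k` terms of the sequence. -/
def runCount {ι : Type*} [DecidableEq ι] (x : ℕ → ι) (k : ℕ) : ℕ :=
  ((Finset.Icc 1 k).filter (fun j => x j = x k)).card

/-!
On the occurrences of a fixed value `i` among `x₁, …, x_K`, the running count is strictly
increasing with values in `{1, …, cᵢ}`, hence a bijection onto `{1, …, cᵢ}`. So the sum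
splits as `∑ᵢ ∑_{n ≤ cᵢ} 1/√n ≤ ∑ᵢ 2√cᵢ`, and Cauchy–Schwarz with `∑ᵢ cᵢ = K` gives
`∑ᵢ √cᵢ ≤ √(card ι · K)`.
-/

open Finset

namespace Real

/-- `√(t + 1) - √t = 1 / (√(t + 1) + √t)` and the denominator is at most `2√(t + 1)`. -/
lemma one_div_sqrt_add_one_le {t : ℝ} (ht : 0 ≤ t) :
    1 / √(t + 1) ≤ 2 * (√(t + 1) - √t) := by
  have hpos : 0 < √(t + 1) := sqrt_pos.2 (by linarith)
  have hmono : √t ≤ √(t + 1) := sqrt_le_sqrt (by linarith)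
  rw [div_le_iff₀ hpos]
  nlinarith [sq_sqrt ht, sq_sqrt (by linarith : 0 ≤ t + 1), sqrt_nonneg t]

lemma sum_Icc_one_div_sqrt_le (c : ℕ) : ∑ n ∈ Icc 1 c, 1 / √n ≤ 2 * √c := by
  induction c with
  | zero => simp
  | succ c ih =>
    rw [sum_Icc_succ_top (by omega)]
    have := one_div_sqrt_add_one_le (Nat.cast_nonneg' c)
    push_cast
    linarith

lemma sum_sqrt_le_sqrt_card_mul_sum {ι : Type*} (s : Finset ι) {f : ι → ℝ}
    (hf : ∀ i, 0 ≤ f i) : ∑ i ∈ s, √(f i) ≤ √(#s * ∑ i ∈ s, f i) := by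
  simpa [sqrt_mul (Nat.cast_nonneg' #s)] using
    sum_sqrt_mul_sqrt_le s (fun _ ↦ zero_le_one) hf

end Real

section runCount

variable {ι : Type*} [DecidableEq ι] (x : ℕ → ι)

lemma one_le_runCount {k : ℕ} (hk : 1 ≤ k) : 1 ≤ runCount x k :=
  card_pos.2 ⟨k, by simp [hk]⟩

lemma runCount_le_card_filter {k K : ℕ} (hkK : k ≤ K) :
    runCount x k ≤ #((Icc 1 K).filter (x · = x k)) :=
  card_le_card (filter_subset_filter _ (Icc_subset_Icc_right hkK))

lemma strictMonoOn_runCount (i : ι) : StrictMonoOn (runCount x) {k | x k = i} := by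
  intro j hj k hk hjk
  apply card_lt_card
  refine (ssubset_iff_of_subset fun m hm ↦ ?_).2 ⟨k, ?_, ?_⟩
  · simp only [mem_filter, mem_Icc] at hm ⊢
    exact ⟨⟨hm.1.1, by omega⟩, hm.2.trans (hj.trans hk.symm)⟩
  · simp only [mem_filter, mem_Icc, le_refl, and_true]
    omega
  · simp only [mem_filter, mem_Icc, not_and]
    omega

lemma injOn_runCount_filter (K : ℕ) (i : ι) :
    Set.InjOn (runCount x) ((Icc 1 K).filter (x · = i)) :=
  (strictMonoOn_runCount x i).injOn.mono fun _ hk ↦ (mem_filter.1 hk).2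

lemma image_runCount_filter (K : ℕ) (i : ι) :
    ((Icc 1 K).filter (x · = i)).image (runCount x) = Icc 1 #((Icc 1 K).filter (x · = i)) := by
  refine eq_of_subset_of_card_le (fun n hn ↦ ?_)
    (by simp [card_image_of_injOn (injOn_runCount_filter x K i)])
  obtain ⟨k, hk, rfl⟩ := mem_image.1 hn
  obtain ⟨hkK, rfl⟩ := mem_filter.1 hk
  exact mem_Icc.2 ⟨one_le_runCount x (mem_Icc.1 hkK).1,
    runCount_le_card_filter x (mem_Icc.1 hkK).2⟩

lemma sum_filter_runCount {M : Type*} [AddCommMonoid M] (f : ℕ → M) (K : ℕ) (i : ι) :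
    ∑ k ∈ (Icc 1 K).filter (x · = i), f (runCount x k) =
      ∑ n ∈ Icc 1 #((Icc 1 K).filter (x · = i)), f n := by
  rw [← image_runCount_filter, sum_image (injOn_runCount_filter x K i)]

end runCount

/-- Bound on accumulated count-based intrinsic-motivation bonuses:
`∑_{k=1}^K 1/√N_k ≤ 2 √((card ι) · K)`. -/
theorem sum_inv_sqrt_runCount_le {ι : Type*} [Fintype ι] [DecidableEq ι]
    (x : ℕ → ι) (K : ℕ) :
    ∑ k ∈ Finset.Icc 1 K, 1 / Real.sqrt (runCount x k) ≤
      2 * Real.sqrt ((Fintype.card ι : ℝ) * K) := by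
  set c : ι → ℕ := fun i ↦ #((Icc 1 K).filter (x · = i))
  have hc : ∑ i, (c i : ℝ) = K := by
    rw_mod_cast [← card_eq_sum_card_fiberwise fun k _ ↦ mem_univ (x k)]
    simp
  calc ∑ k ∈ Icc 1 K, 1 / √(runCount x k)
      = ∑ i, ∑ k ∈ (Icc 1 K).filter (x · = i), 1 / √(runCount x k) :=
        (sum_fiberwise _ x _).symm
    _ = ∑ i, ∑ n ∈ Icc 1 (c i), 1 / √n := by
        simp only [sum_filter_runCount x (fun n : ℕ ↦ 1 / √n), c]
    _ ≤ ∑ i, 2 * √(c i) := sum_le_sum fun i _ ↦ Real.sum_Icc_one_div_sqrt_le (c i)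
    _ ≤ 2 * √(Fintype.card ι * K) := by
        rw [← mul_sum, ← hc, ← card_univ]
        gcongr
        exact Real.sum_sqrt_le_sqrt_card_mul_sum _ fun i ↦ Nat.cast_nonneg' (c i)
end
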